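/- arXiv:1005.4624 — 10 statements merged into one kernel-verified Lean document; each statement's English description precedes it below -/
import Mathlib

section
/- Let f : ℝ → ℝ be continuous, nonincreasing on (-∞, 0] and nondecreasing on [0, ∞), with f(0) = 0. Define g(k) = f(max(k,0)) and h(k) = f(min(k,0)). Then for all a, b ∈ ℝ: if a ≤ b then the minimum of f on [a,b] equals max(min_{[a,b]} g, min_{[a,b]} h) = max(g(a), h(b)), and if a > b then the maximum of f on [b,a] equals max(g(a), h(b)). Hence the Osher flux (min over [a,b] of f if a ≤ b, max over [b,a] of f if a > b) equals max(g(a), h(b)) in both cases. -/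
/-- For continuous `f` with minimum at `0` (nonincreasing on `(-∞,0]`,
nondecreasing on `[0,∞)`, `f 0 = 0`), with `g k = f (max k 0)` and `h k = f (min k 0)`:
if `a ≤ b` then `min_{[a,b]} f = max (min_{[a,b]} g) (min_{[a,b]} h) = max (g a) (h b)`;
if `a > b` then `max_{[b,a]} f = max (g a) (h b)`. -/
theorem godunov_flux_eq_flux_splitting
    (f : ℝ → ℝ)
    (hc : Continuous f)
    (hanti : AntitoneOn f (Set.Iic 0))
    (hmono : MonotoneOn f (Set.Ici 0))
    (hf0 : f 0 = 0)
    (a b : ℝ) :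
    (a ≤ b →
      sInf (f '' Set.Icc a b) =
        max (sInf ((fun k => f (max k 0)) '' Set.Icc a b))
            (sInf ((fun k => f (min k 0)) '' Set.Icc a b)) ∧
      sInf (f '' Set.Icc a b) = max (f (max a 0)) (f (min b 0))) ∧
    (b < a →
      sSup (f '' Set.Icc b a) = max (f (max a 0)) (f (min b 0))) := by
  have hpos : ∀ y : ℝ, 0 ≤ f y := by
    intro y
    rcases le_total y 0 with hy | hy
    · have := hanti (Set.mem_Iic.2 hy) (Set.mem_Iic.2 le_rfl) hy
      linarith
    · have := hmono (Set.mem_Ici.2 le_rfl) (Set.mem_Ici.2 hy) hy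
      linarith
  constructor
  · intro hab
    have key : sInf (f '' Set.Icc a b) = max (f (max a 0)) (f (min b 0)) := by
      rcases le_total b 0 with hb | hb
      · have hmax : max a 0 = 0 := max_eq_right (hab.trans hb)
        have hmin : min b 0 = b := min_eq_left hb
        rw [hmax, hmin, hf0, max_eq_right (hpos b)]
        apply IsLeast.csInf_eq
        refine ⟨⟨b, ⟨hab, le_rfl⟩, rfl⟩, ?_⟩
        rintro x ⟨y, hy, rfl⟩
        exact hanti (Set.mem_Iic.2 (hy.2.trans hb)) (Set.mem_Iic.2 hb) hy.2
      · rcases le_total 0 a with ha | ha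
        · have hmax : max a 0 = a := max_eq_left ha
          have hmin : min b 0 = 0 := min_eq_right hb
          rw [hmax, hmin, hf0, max_eq_left (hpos a)]
          apply IsLeast.csInf_eq
          refine ⟨⟨a, ⟨le_rfl, hab⟩, rfl⟩, ?_⟩
          rintro x ⟨y, hy, rfl⟩
          exact hmono (Set.mem_Ici.2 ha) (Set.mem_Ici.2 (ha.trans hy.1)) hy.1
        · have hmax : max a 0 = 0 := max_eq_right ha
          have hmin : min b 0 = 0 := min_eq_right hb
          rw [hmax, hmin, hf0, max_self]
          apply IsLeast.csInf_eq
          refine ⟨⟨0, ⟨ha, hb⟩, hf0⟩, ?_⟩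
          rintro x ⟨y, _, rfl⟩
          exact hpos y
    have hg : sInf ((fun k => f (max k 0)) '' Set.Icc a b) = f (max a 0) := by
      apply IsLeast.csInf_eq
      refine ⟨⟨a, ⟨le_rfl, hab⟩, rfl⟩, ?_⟩
      rintro x ⟨y, hy, rfl⟩
      exact hmono (Set.mem_Ici.2 (le_max_right a 0)) (Set.mem_Ici.2 (le_max_right y 0))
        (max_le_max hy.1 le_rfl)
    have hh : sInf ((fun k => f (min k 0)) '' Set.Icc a b) = f (min b 0) := by
      apply IsLeast.csInf_eq
      refine ⟨⟨b, ⟨hab, le_rfl⟩, rfl⟩, ?_⟩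
      rintro x ⟨y, hy, rfl⟩
      exact hanti (Set.mem_Iic.2 (min_le_right y 0)) (Set.mem_Iic.2 (min_le_right b 0))
        (min_le_min hy.2 le_rfl)
    exact ⟨by rw [key, hg, hh], key⟩
  · intro hba
    have hsup : sSup (f '' Set.Icc b a) = max (f b) (f a) := by
      apply IsGreatest.csSup_eq
      constructor
      · rcases max_cases (f b) (f a) with ⟨h1, _⟩ | ⟨h1, _⟩
        · exact ⟨b, ⟨le_rfl, hba.le⟩, h1.symm⟩
        · exact ⟨a, ⟨hba.le, le_rfl⟩, h1.symm⟩
      · rintro x ⟨y, hy, rfl⟩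
        rcases le_total y 0 with hy0 | hy0
        · exact le_trans (hanti (Set.mem_Iic.2 ((hy.1).trans hy0)) (Set.mem_Iic.2 hy0) hy.1)
            (le_max_left _ _)
        · exact le_trans (hmono (Set.mem_Ici.2 hy0) (Set.mem_Ici.2 (hy0.trans hy.2)) hy.2)
            (le_max_right _ _)
    rw [hsup]
    rcases le_total a 0 with ha | ha
    · have hmax : max a 0 = 0 := max_eq_right ha
      have hmin : min b 0 = b := min_eq_left (hba.le.trans ha)
      have hab' : f a ≤ f b := hanti (Set.mem_Iic.2 (hba.le.trans ha)) (Set.mem_Iic.2 ha) hba.le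
      rw [hmax, hmin, hf0, max_eq_left hab', max_eq_right (hpos b)]
    · have hmax : max a 0 = a := max_eq_left ha
      rcases le_total b 0 with hb | hb
      · have hmin : min b 0 = b := min_eq_left hb
        rw [hmax, hmin, max_comm]
      · have hmin : min b 0 = 0 := min_eq_right hb
        have hab' : f b ≤ f a := hmono (Set.mem_Ici.2 hb) (Set.mem_Ici.2 (hb.trans hba.le)) hba.le
        rw [hmax, hmin, hf0, max_eq_right hab', max_eq_left (hpos a)]
end

section
/- Let Q : [0, ρ_j] → ℝ be continuous, nondecreasing on [0, ρ_c] and nonincreasing on [ρ_c, ρ_j], with demand D(ρ) = Q(min(ρ, ρ_c)) and supply S(ρ) = Q(max(ρ, ρ_c)). Then for all ρ_l, ρ_r ∈ [0, ρ_j]: if ρ_l ≤ ρ_r then min_{ρ ∈ [ρ_l, ρ_r]} Q(ρ) = min(D(ρ_l), S(ρ_r)), and if ρ_l > ρ_r then max_{ρ ∈ [ρ_r, ρ_l]} Q(ρ) = min(D(ρ_l), S(ρ_r)). -/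
/-- For a unimodal fundamental diagram `Q` on `[0, ρ_j]` with critical
density `ρ_c`, the Osher/Godunov flux equals the supply-demand flux
`min (D ρl) (S ρr)`: if `ρl ≤ ρr` it is the minimum of `Q` over `[ρl, ρr]`, and if
`ρl > ρr` it is the maximum of `Q` over `[ρr, ρl]`. -/
theorem osher_flux_eq_supply_demand_flux
    (Q : ℝ → ℝ) (ρ_j ρ_c : ℝ)
    (hρc0 : 0 ≤ ρ_c) (hρcj : ρ_c ≤ ρ_j)
    (hcont : ContinuousOn Q (Set.Icc 0 ρ_j))
    (hmono : MonotoneOn Q (Set.Icc 0 ρ_c))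
    (hanti : AntitoneOn Q (Set.Icc ρ_c ρ_j)) :
    ∀ ρl ∈ Set.Icc (0:ℝ) ρ_j, ∀ ρr ∈ Set.Icc (0:ℝ) ρ_j,
      (ρl ≤ ρr →
        sInf (Q '' Set.Icc ρl ρr) = min (Q (min ρl ρ_c)) (Q (max ρr ρ_c))) ∧
      (ρr < ρl →
        sSup (Q '' Set.Icc ρr ρl) = min (Q (min ρl ρ_c)) (Q (max ρr ρ_c))) := by
  intro ρl ⟨hl0, hlj⟩ ρr ⟨hr0, hrj⟩
  constructor
  · intro h
    rcases le_total ρr ρ_c with hA | hA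
    · -- everything left of ρ_c
      have hminl : min ρl ρ_c = ρl := min_eq_left (le_trans h hA)
      have hmaxr : max ρr ρ_c = ρ_c := max_eq_right hA
      rw [hminl, hmaxr]
      have hQlc : Q ρl ≤ Q ρ_c :=
        hmono ⟨hl0, le_trans h hA⟩ ⟨hρc0, le_refl _⟩ (le_trans h hA)
      rw [min_eq_left hQlc]
      apply IsLeast.csInf_eq
      refine ⟨⟨ρl, ⟨le_refl _, h⟩, rfl⟩, ?_⟩
      rintro y ⟨x, ⟨hx1, hx2⟩, rfl⟩
      exact hmono ⟨hl0, le_trans h hA⟩ ⟨le_trans hl0 hx1, le_trans hx2 hA⟩ hx1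
    rcases le_total ρ_c ρl with hB | hB
    · -- everything right of ρ_c
      have hminl : min ρl ρ_c = ρ_c := min_eq_right hB
      have hmaxr : max ρr ρ_c = ρr := max_eq_left hA
      rw [hminl, hmaxr]
      have hQrc : Q ρr ≤ Q ρ_c :=
        hanti ⟨le_refl _, hρcj⟩ ⟨le_trans hB h, hrj⟩ (le_trans hB h)
      rw [min_eq_right hQrc]
      apply IsLeast.csInf_eq
      refine ⟨⟨ρr, ⟨h, le_refl _⟩, rfl⟩, ?_⟩
      rintro y ⟨x, ⟨hx1, hx2⟩, rfl⟩
      exact hanti ⟨le_trans hB hx1, le_trans hx2 hrj⟩ ⟨le_trans hB h, hrj⟩ hx2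
    · -- ρl ≤ ρ_c ≤ ρr
      have hminl : min ρl ρ_c = ρl := min_eq_left hB
      have hmaxr : max ρr ρ_c = ρr := max_eq_left hA
      rw [hminl, hmaxr]
      apply IsLeast.csInf_eq
      constructor
      · rcases min_cases (Q ρl) (Q ρr) with ⟨he, _⟩ | ⟨he, _⟩
        · exact ⟨ρl, ⟨le_refl _, h⟩, he.symm⟩
        · exact ⟨ρr, ⟨h, le_refl _⟩, he.symm⟩
      · rintro y ⟨x, ⟨hx1, hx2⟩, rfl⟩
        rcases le_total x ρ_c with hc | hc
        · exact le_trans (min_le_left _ _)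
            (hmono ⟨hl0, hB⟩ ⟨le_trans hl0 hx1, hc⟩ hx1)
        · exact le_trans (min_le_right _ _)
            (hanti ⟨hc, le_trans hx2 hrj⟩ ⟨hA, hrj⟩ hx2)
  · intro h
    rcases le_total ρl ρ_c with hA | hA
    · -- everything left of ρ_c : max = Q ρl
      have hminl : min ρl ρ_c = ρl := min_eq_left hA
      have hmaxr : max ρr ρ_c = ρ_c := max_eq_right (le_trans h.le hA)
      rw [hminl, hmaxr]
      have hQlc : Q ρl ≤ Q ρ_c := hmono ⟨hl0, hA⟩ ⟨hρc0, le_refl _⟩ hA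
      rw [min_eq_left hQlc]
      apply IsGreatest.csSup_eq
      refine ⟨⟨ρl, ⟨h.le, le_refl _⟩, rfl⟩, ?_⟩
      rintro y ⟨x, ⟨hx1, hx2⟩, rfl⟩
      exact hmono ⟨le_trans hr0 hx1, le_trans hx2 hA⟩ ⟨hl0, hA⟩ hx2
    rcases le_total ρ_c ρr with hB | hB
    · -- everything right of ρ_c : max = Q ρr
      have hminl : min ρl ρ_c = ρ_c := min_eq_right hA
      have hmaxr : max ρr ρ_c = ρr := max_eq_left hB
      rw [hminl, hmaxr]
      have hQrc : Q ρr ≤ Q ρ_c := hanti ⟨le_refl _, hρcj⟩ ⟨hB, hrj⟩ hB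
      rw [min_eq_right hQrc]
      apply IsGreatest.csSup_eq
      refine ⟨⟨ρr, ⟨le_refl _, h.le⟩, rfl⟩, ?_⟩
      rintro y ⟨x, ⟨hx1, hx2⟩, rfl⟩
      exact hanti ⟨hB, hrj⟩ ⟨le_trans hB hx1, le_trans hx2 hlj⟩ hx1
    · -- ρr ≤ ρ_c ≤ ρl : max = Q ρ_c
      have hminl : min ρl ρ_c = ρ_c := min_eq_right hA
      have hmaxr : max ρr ρ_c = ρ_c := max_eq_right hB
      rw [hminl, hmaxr, min_self]
      apply IsGreatest.csSup_eq
      refine ⟨⟨ρ_c, ⟨hB, hA⟩, rfl⟩, ?_⟩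
      rintro y ⟨x, ⟨hx1, hx2⟩, rfl⟩
      rcases le_total x ρ_c with hc | hc
      · exact hmono ⟨le_trans hr0 hx1, hc⟩ ⟨hρc0, le_refl _⟩ hc
      · exact hanti ⟨le_refl _, hρcj⟩ ⟨hc, le_trans hx2 hlj⟩ hc
end

section
/- In the Riemann problem for the inhomogeneous LWR model with upstream state U_1 = (D_1, S_1) (capacity C_1) and downstream state U_2 = (D_2, S_2) (capacity C_2), suppose the stationary states U_1⁻, U_2⁺ and interior states V_1, V_2 satisfy: (i) flux conservation q(U_1⁻) = q(U_2⁺) where q(D,S) = min(D,S); (ii) admissibility of stationary states: U_1⁻ = (D_1, C_1) or U_1⁻ = (C_1, s) with s < D_1, and U_2⁺ = (C_2, S_2) or U_2⁺ = (d, C_2) with d < S_2; (iii) admissibility of interior states: if U_1⁻ = (C_1, s) with s < C_1 then V_1 = U_1⁻, otherwise V_1 = (d', s') with s' ≥ q(U_1⁻); symmetrically if U_2⁺ = (d, C_2) with d < C_2 then V_2 = U_2⁺, otherwise V_2 = (d'', s'') with d'' ≥ q(U_2⁺); (iv) the entropy condition q(U_1⁻) = min(D(V_1), S(V_2)) where D(V)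 and S(V) denote the demand and supply components of V. Then the boundary flux satisfies q(U_1⁻) = q(U_2⁺) = min(D_1, S_2). -/
/-- A supply-demand state `(d, s)` for a link with capacity `C`. -/
def IsState (C d s : ℝ) : Prop :=
  0 ≤ d ∧ d ≤ C ∧ 0 ≤ s ∧ s ≤ C ∧ max d s = C

/-- The full set of conditions on the Riemann problem at a linear boundary:
initial states `U₁ = (D1, S1)` (capacity `C1`), `U₂ = (D2, S2)` (capacity `C2`),
stationary states `U₁⁻ = (d1m, s1m)`, `U₂⁺ = (d2p, s2p)`, and interior states
`V₁ = (vd1, vs1)`, `V₂ = (vd2, vs2)`, subject to: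
(i) flux conservation; (ii) admissibility of stationary states;
(iii) admissibility of interior states; (iv) the supply-demand entropy condition. -/
def RiemannConds (C1 C2 D1 S1 D2 S2 d1m s1m d2p s2p vd1 vs1 vd2 vs2 : ℝ) : Prop :=
  IsState C1 D1 S1 ∧ IsState C2 D2 S2 ∧
  IsState C1 d1m s1m ∧ IsState C2 d2p s2p ∧
  IsState C1 vd1 vs1 ∧ IsState C2 vd2 vs2 ∧
  -- (i) flux conservation
  min d1m s1m = min d2p s2p ∧
  -- (ii) admissible stationary states
  ((d1m = D1 ∧ s1m = C1) ∨ (d1m = C1 ∧ s1m < D1)) ∧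
  ((d2p = C2 ∧ s2p = S2) ∨ (d2p < S2 ∧ s2p = C2)) ∧
  -- (iii) admissible interior states
  (s1m < C1 → vd1 = d1m ∧ vs1 = s1m) ∧
  (¬ s1m < C1 → vs1 ≥ min d1m s1m) ∧
  (d2p < C2 → vd2 = d2p ∧ vs2 = s2p) ∧
  (¬ d2p < C2 → vd2 ≥ min d2p s2p) ∧
  -- (iv) entropy condition
  min d1m s1m = min vd1 vs2

/-- global flux lemma: under flux conservation, admissibility of
stationary and interior states, and the entropy condition, the boundary flux equals
`min D1 S2`. -/
theorem global_flux_lemma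
    (C1 C2 D1 S1 D2 S2 d1m s1m d2p s2p vd1 vs1 vd2 vs2 : ℝ)
    (h : RiemannConds C1 C2 D1 S1 D2 S2 d1m s1m d2p s2p vd1 vs1 vd2 vs2) :
    min d1m s1m = min D1 S2 ∧ min d2p s2p = min D1 S2 := by
  obtain ⟨⟨_, hD1, _, hS1, _⟩, ⟨_, _, _, hS2C, _⟩, ⟨_, hd1, _, hs1, _⟩, ⟨_, hd2, _, hs2, _⟩,
    _, _, hflux, hst1, hst2, hi1a, hi1b, hi2a, hi2b, hent⟩ := h
  rcases hst1 with ⟨hA1, hA2⟩ | ⟨hB1, hB2⟩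
  · rcases hst2 with ⟨hC1', hC2⟩ | ⟨hD1', hD2⟩
    · -- A & C: flux = D1 = S2
      have h1 : min d1m s1m = D1 := by rw [hA1, hA2]; exact min_eq_left hD1
      have h2 : min d2p s2p = S2 := by rw [hC1', hC2]; exact min_eq_right (hC2 ▸ hs2)
      have hDS : D1 = S2 := by rw [← h1, hflux, h2]
      refine ⟨?_, ?_⟩
      · rw [h1, min_eq_left hDS.le]
      · rw [h2, ← hDS, min_self]
    · -- A & D: flux = D1 = d2p < S2
      have h1 : min d1m s1m = D1 := by rw [hA1, hA2]; exact min_eq_left hD1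
      have h2 : min d2p s2p = d2p := by rw [hD2]; exact min_eq_left hd2
      have hDd : D1 = d2p := by rw [← h1, hflux, h2]
      have : D1 < S2 := hDd ▸ hD1'
      exact ⟨by rw [h1, min_eq_left this.le], by rw [h2, ← hDd, min_eq_left this.le]⟩
  · rcases hst2 with ⟨hC1', hC2⟩ | ⟨hD1', hD2⟩
    · -- B & C: flux = s1m = S2 < D1
      have h1 : min d1m s1m = s1m := by rw [hB1]; exact min_eq_right hs1
      have h2 : min d2p s2p = S2 := by rw [hC1', hC2]; exact min_eq_right (hC2 ▸ hs2)
      have hsS : s1m = S2 := by rw [← h1, hflux, h2]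
      have : S2 < D1 := hsS ▸ hB2
      exact ⟨by rw [h1, hsS, min_eq_right this.le], by rw [h2, min_eq_right this.le]⟩
    · -- B & D: contradiction via entropy
      exfalso
      have hs1C : s1m < C1 := lt_of_lt_of_le hB2 hD1
      have hd2C : d2p < C2 := lt_of_lt_of_le hD1' hS2C
      obtain ⟨hv1, _⟩ := hi1a hs1C
      obtain ⟨_, hv2⟩ := hi2a hd2C
      have h1 : min d1m s1m = s1m := by rw [hB1]; exact min_eq_right hs1
      have h2 : min d2p s2p = d2p := by rw [hD2]; exact min_eq_left hd2
      have heq : s1m = d2p := by rw [← h1, hflux, h2]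
      rw [h1, hv1, hB1, hv2, hD2] at hent
      rcases min_cases C1 C2 with ⟨he, _⟩ | ⟨he, _⟩ <;> rw [he] at hent <;> linarith
end

section
/- Under the same admissibility and entropy conditions as in the global flux lemma: if D_1 < S_2, then the stationary and interior states are unique and given by U_1⁻ = V_1 = (D_1, C_1) and U_2⁺ = V_2 = (D_1, C_2). -/
/-- if `D1 < S2`, the stationary and interior states are unique:
`U₁⁻ = V₁ = (D1, C1)` and `U₂⁺ = V₂ = (D1, C2)`. -/
theorem riemann_case_D1_lt_S2
    (C1 C2 D1 S1 D2 S2 d1m s1m d2p s2p vd1 vs1 vd2 vs2 : ℝ)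
    (h : RiemannConds C1 C2 D1 S1 D2 S2 d1m s1m d2p s2p vd1 vs1 vd2 vs2)
    (hlt : D1 < S2) :
    d1m = D1 ∧ s1m = C1 ∧ vd1 = D1 ∧ vs1 = C1 ∧
    d2p = D1 ∧ s2p = C2 ∧ vd2 = D1 ∧ vs2 = C2 := by
  obtain ⟨h1, h2, h1m, h2p, hv1, hv2, hflux, hst1, hst2, hi1, hi1', hi2, hi2', hent⟩ := h
  obtain ⟨hD1nn, hD1le, hS1nn, hS1le, hmax1⟩ := h1
  obtain ⟨_, _, hS2nn, hS2le, _⟩ := h2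
  obtain ⟨_, hd1mle, _, hs1mle, hmax1m⟩ := h1m
  obtain ⟨_, hd2ple, _, hs2ple, hmax2p⟩ := h2p
  obtain ⟨_, hvd1le, _, hvs1le, hmaxv1⟩ := hv1
  obtain ⟨_, hvd2le, _, hvs2le, hmaxv2⟩ := hv2
  -- upstream case analysis
  rcases hst1 with ⟨hd1, hs1⟩ | ⟨hd1, hs1⟩
  · -- d1m = D1, s1m = C1; q = D1
    have hq : min d1m s1m = D1 := by
      rw [hd1, hs1]; exact min_eq_left hD1le
    rcases hst2 with ⟨hd2, hs2⟩ | ⟨hd2, hs2⟩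
    · -- q = S2, contradiction
      exfalso
      rw [hq, hd2, hs2, min_eq_right hS2le] at hflux
      linarith
    · -- d2p = q = D1
      have hd2pq : d2p = D1 := by
        rw [hq, hs2, min_eq_left hd2ple] at hflux; linarith
      have hd2C2 : d2p < C2 := lt_of_lt_of_le (hd2pq ▸ hlt) hS2le
      obtain ⟨hvd2, hvs2⟩ := hi2 hd2C2
      have hvd1D : vd1 = D1 := by
        rw [hq, hvs2, hs2] at hent
        rcases le_total vd1 C2 with hle | hle
        · rw [min_eq_left hle] at hent; linarith
        · rw [min_eq_right hle] at hent; linarith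
      have hvs1C : vs1 = C1 := by
        rcases eq_or_lt_of_le hD1le with heq | hltc
        · have := hi1' (by rw [hs1]; exact lt_irrefl C1)
          rw [hq] at this
          linarith [this, heq]
        · rcases max_cases vd1 vs1 with ⟨he, _⟩ | ⟨he, _⟩
          · exfalso; rw [he, hvd1D] at hmaxv1; linarith
          · rw [he] at hmaxv1; exact hmaxv1
      exact ⟨hd1, hs1, hvd1D, hvs1C, hd2pq, hs2, by rw [hvd2, hd2pq], by rw [hvs2, hs2]⟩
  · -- d1m = C1, s1m < D1: contradiction
    exfalso
    have hs1C : s1m < C1 := lt_of_lt_of_le hs1 hD1le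
    have hq : min d1m s1m = s1m := by
      rw [hd1]; exact min_eq_right hs1mle
    obtain ⟨hvd1, hvs1⟩ := hi1 hs1C
    rcases hst2 with ⟨hd2, hs2⟩ | ⟨hd2, hs2⟩
    · rw [hq, hd2, hs2, min_eq_right hS2le] at hflux
      linarith
    · have hd2pq : d2p = s1m := by
        rw [hq, hs2, min_eq_left hd2ple] at hflux; linarith
      have hd2C2 : d2p < C2 := lt_of_lt_of_le (lt_of_lt_of_le (hd2pq ▸ hs1) (le_of_lt hlt)) hS2le
      obtain ⟨hvd2, hvs2⟩ := hi2 hd2C2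
      rw [hq, hvd1, hd1, hvs2, hs2] at hent
      rcases min_cases C1 C2 with ⟨he, _⟩ | ⟨he, _⟩ <;> rw [he] at hent <;>
        linarith [lt_of_lt_of_le (hd2pq ▸ hs1) (le_of_lt hlt), hS2le]
end

section
/- Under the same admissibility and entropy conditions: if D_1 > S_2, then the stationary and interior states are unique and given by U_1⁻ = V_1 = (C_1, S_2) and U_2⁺ = V_2 = (C_2, S_2). -/
/-- if `D1 > S2`, the stationary and interior states are unique:
`U₁⁻ = V₁ = (C1, S2)` and `U₂⁺ = V₂ = (C2, S2)`. -/
theorem riemann_case_D1_gt_S2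
    (C1 C2 D1 S1 D2 S2 d1m s1m d2p s2p vd1 vs1 vd2 vs2 : ℝ)
    (h : RiemannConds C1 C2 D1 S1 D2 S2 d1m s1m d2p s2p vd1 vs1 vd2 vs2)
    (hgt : D1 > S2) :
    d1m = C1 ∧ s1m = S2 ∧ vd1 = C1 ∧ vs1 = S2 ∧
    d2p = C2 ∧ s2p = S2 ∧ vd2 = C2 ∧ vs2 = S2 := by
  obtain ⟨⟨hD0, hDC, hS0, hSC, hmax1⟩, h2, ⟨h1m0, h1mC, hs1m0, hs1mC, hmaxm⟩,
    ⟨h2p0, h2pC, hs2p0, hs2pC, hmaxp⟩, hV1, ⟨hvd20, hvd2C, hvs20, hvs2C, hmaxv2⟩,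
    hflux, hst1, hst2, hint1, hint1', hint2, hint2', hent⟩ := h
  -- U1m must be (C1, s1m) with s1m < D1
  rcases hst1 with ⟨hd1, hs1⟩ | ⟨hd1, hs1⟩
  · -- s1m = C1, d1m = D1, min = D1
    exfalso
    have hmin1 : min d1m s1m = D1 := by rw [hd1, hs1, min_eq_left hDC]
    rcases hst2 with ⟨hd2, hs2⟩ | ⟨hd2, hs2⟩
    · have : min d2p s2p = S2 := by rw [hd2, ← hs2]; exact min_eq_right hs2pC
      linarith [hflux ▸ hmin1, this]
    · have : min d2p s2p ≤ d2p := min_le_left _ _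
      linarith [hflux ▸ hmin1]
  · -- d1m = C1, s1m < D1 ≤ C1
    have hs1C : s1m < C1 := lt_of_lt_of_le hs1 hDC
    have hmin1 : min d1m s1m = s1m := by rw [hd1]; exact min_eq_right hs1C.le
    obtain ⟨hvd1, hvs1⟩ := hint1 hs1C
    rcases hst2 with ⟨hd2, hs2⟩ | ⟨hd2, hs2⟩
    · -- d2p = C2, s2p = S2
      have hS2C2 : S2 ≤ C2 := hs2 ▸ hs2pC
      have hmin2 : min d2p s2p = S2 := by rw [hd2, hs2, min_eq_right hS2C2]
      have hs1S2 : s1m = S2 := by rw [← hmin1, hflux, hmin2]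
      -- entropy: s1m = min vd1 vs2, vd1 = d1m = C1
      have hent' : S2 = min C1 vs2 := by
        rw [← hs1S2, ← hmin1, hent, hvd1, hd1]
      have hS2C1 : S2 < C1 := lt_of_lt_of_le hgt hDC
      have hvs2 : vs2 = S2 := by
        rcases le_total C1 vs2 with hle | hle
        · rw [min_eq_left hle] at hent'; linarith
        · rw [min_eq_right hle] at hent'; linarith
      have hvd2 : vd2 = C2 := by
        rcases lt_or_ge S2 C2 with hlt | hge
        · have := hmaxv2
          rw [hvs2] at this
          rcases max_choice vd2 S2 with hc | hc <;> rw [hc] at this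
          · exact this
          · linarith
        · have h1 := hint2' (by rw [hd2]; exact lt_irrefl C2)
          rw [hmin2] at h1
          linarith
      exact ⟨hd1, hs1S2, hvd1.trans hd1, hvs1.trans hs1S2, hd2, hs2, hvd2, hvs2⟩
    · -- d2p < S2, s2p = C2 : contradiction
      exfalso
      have hd2C : d2p < C2 := lt_of_lt_of_le hd2 h2.2.2.2.1
      obtain ⟨hvd2, hvs2⟩ := hint2 hd2C
      have hmin2 : min d2p s2p = d2p := by rw [hs2]; exact min_eq_left h2pC
      have hs1d2 : s1m = d2p := by rw [← hmin1, hflux, hmin2]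
      -- entropy: s1m = min vd1 vs2 = min C1 C2
      have : s1m = min C1 C2 := by
        rw [← hmin1, hent, hvd1, hd1, hvs2, hs2]
      have : s1m < min C1 C2 := lt_min hs1C (hs1d2 ▸ hd2C)
      linarith
end

section
/- Under the same admissibility and entropy conditions: if D_1 = S_2, then the stationary states are unique: U_1⁻ = (D_1, C_1) and U_2⁺ = (C_2, S_2); moreover any admissible interior states satisfy either (V_1 = (D_1, C_1) and both components of V_2 are ≥ S_2) or (V_2 = (C_2, S_2) and both components of V_1 are ≥ D_1). -/
/-- if `D1 = S2`, the stationary states are unique, `U₁⁻ = (D1, C1)`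
and `U₂⁺ = (C2, S2)`, and any admissible interior states satisfy either
`V₁ = (D1, C1)` with both components of `V₂` at least `S2`, or
`V₂ = (C2, S2)` with both components of `V₁` at least `D1`. -/
theorem riemann_case_D1_eq_S2
    (C1 C2 D1 S1 D2 S2 d1m s1m d2p s2p vd1 vs1 vd2 vs2 : ℝ)
    (h : RiemannConds C1 C2 D1 S1 D2 S2 d1m s1m d2p s2p vd1 vs1 vd2 vs2)
    (heq : D1 = S2) :
    d1m = D1 ∧ s1m = C1 ∧ d2p = C2 ∧ s2p = S2 ∧
    ((vd1 = D1 ∧ vs1 = C1 ∧ vd2 ≥ S2 ∧ vs2 ≥ S2) ∨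
     (vd2 = C2 ∧ vs2 = S2 ∧ vd1 ≥ D1 ∧ vs1 ≥ D1)) := by
  obtain ⟨⟨_, hD1C1, _, hS1C1, _⟩, ⟨_, hD2C2, _, hS2C2, _⟩,
    ⟨_, hd1mC1, _, hs1mC1, hmax1⟩, ⟨_, hd2pC2, _, hs2pC2, hmax2⟩,
    ⟨_, hvd1C1, _, hvs1C1, hmaxv1⟩, ⟨_, hvd2C2, _, hvs2C2, hmaxv2⟩,
    hflux, hst1, hst2, hi1, hi1', hi2, hi2', hent⟩ := h
  -- resolve stationary states
  have hst : d1m = D1 ∧ s1m = C1 ∧ d2p = C2 ∧ s2p = S2 := by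
    rcases hst1 with ⟨h1, h2⟩ | ⟨h1, h2⟩ <;> rcases hst2 with ⟨h3, h4⟩ | ⟨h3, h4⟩
    · exact ⟨h1, h2, h3, h4⟩
    · -- d1m=D1, s1m=C1, d2p<S2, s2p=C2 : flux D1 = d2p < S2 = D1
      exfalso
      have e1 : min d1m s1m = D1 := by rw [h1, h2]; exact min_eq_left hD1C1
      have e2 : min d2p s2p = d2p := by rw [h4]; exact min_eq_left hd2pC2
      linarith [hflux.symm ▸ e1, e2]
    · -- d1m=C1, s1m<D1, d2p=C2, s2p=S2 : flux s1m = S2 but s1m < D1 = S2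
      exfalso
      have e1 : min d1m s1m = s1m := by rw [h1]; exact min_eq_right hs1mC1
      have e2 : min d2p s2p = S2 := by rw [h3, h4]; exact min_eq_right hS2C2
      linarith [e1 ▸ e2 ▸ hflux]
    · -- both reduced branches: use interior + entropy
      exfalso
      have hs1lt : s1m < C1 := lt_of_lt_of_le h2 hD1C1
      have hd2lt : d2p < C2 := lt_of_lt_of_le h3 hS2C2
      obtain ⟨hv1, _⟩ := hi1 hs1lt
      obtain ⟨_, hv2⟩ := hi2 hd2lt
      have e1 : min d1m s1m = s1m := by rw [h1]; exact min_eq_right hs1mC1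
      have e2 : min d2p s2p = d2p := by rw [h4]; exact min_eq_left hd2pC2
      have hs1d2 : s1m = d2p := by rw [e1] at hflux; rw [e2] at hflux; exact hflux
      have hv1e : vd1 = C1 := hv1.trans h1
      have hv2e : vs2 = C2 := hv2.trans h4
      rw [e1, hv1e, hv2e] at hent
      rcases min_cases C1 C2 with ⟨hm, _⟩ | ⟨hm, _⟩ <;> rw [hm] at hent <;> linarith
  obtain ⟨h1, h2, h3, h4⟩ := hst
  refine ⟨h1, h2, h3, h4, ?_⟩
  have e1 : min d1m s1m = D1 := by rw [h1, h2]; exact min_eq_left hD1C1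
  have hvs1 : vs1 ≥ D1 := e1 ▸ hi1' (by rw [h2]; exact lt_irrefl C1)
  have hvd2 : vd2 ≥ S2 := by
    have e2 : min d2p s2p = S2 := by rw [h3, h4]; exact min_eq_right hS2C2
    exact e2 ▸ hi2' (by rw [h3]; exact lt_irrefl C2)
  rw [e1] at hent
  rcases min_cases vd1 vs2 with ⟨hm, hle⟩ | ⟨hm, hle⟩
  · -- vd1 = D1
    left
    have hvd1 : vd1 = D1 := by rw [hm] at hent; exact hent.symm
    have hvs1e : vs1 = C1 := by
      rcases max_cases vd1 vs1 with ⟨hM, hMle⟩ | ⟨hM, _⟩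
      · rw [hM, hvd1] at hmaxv1; linarith
      · rw [hM] at hmaxv1; exact hmaxv1
    exact ⟨hvd1, hvs1e, hvd2, by linarith⟩
  · -- vs2 = D1 = S2
    right
    have hvs2 : vs2 = S2 := by rw [hm] at hent; rw [← hent, heq]
    have hvd2e : vd2 = C2 := by
      rcases max_cases vd2 vs2 with ⟨hM, _⟩ | ⟨hM, hMle⟩
      · rw [hM] at hmaxv2; exact hmaxv2
      · rw [hM, hvs2] at hmaxv2; linarith
    exact ⟨hvd2e, hvs2, by linarith, hvs1⟩
end

section
/- Under the admissibility and entropy conditions of the Riemann problem, it is impossible for the upstream stationary state to be strictly over-critical (U_1⁻ = (C_1, s) with s < C_1) while simultaneously the downstream stationary state is strictly under-critical (U_2⁺ = (d, C_2) with d < C_2). -/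
/-- Corollary 1, exclusion: it is impossible for the upstream
stationary state to be strictly over-critical (`U₁⁻ = (C1, s)` with `s < C1`) while
the downstream stationary state is strictly under-critical (`U₂⁺ = (d, C2)` with
`d < C2`). -/
theorem no_SOC_upstream_SUC_downstream
    (C1 C2 D1 S1 D2 S2 d1m s1m d2p s2p vd1 vs1 vd2 vs2 : ℝ)
    (h : RiemannConds C1 C2 D1 S1 D2 S2 d1m s1m d2p s2p vd1 vs1 vd2 vs2) :
    ¬ ((d1m = C1 ∧ s1m < C1) ∧ (s2p = C2 ∧ d2p < C2)) := by
  rintro ⟨⟨hd1, hs1⟩, ⟨hs2, hd2⟩⟩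
  obtain ⟨_, _, _, _, _, _, hflux, _, _, hint1, _, hint2, _, hent⟩ := h
  obtain ⟨hv1, hvs1⟩ := hint1 hs1
  obtain ⟨hv2, hvs2⟩ := hint2 hd2
  rw [hv1, hvs2, hd1, hs2] at hent
  rw [min_eq_right hs1.le] at hent
  rw [hd1, hs2, min_eq_right hs1.le, min_eq_left hd2.le] at hflux
  rcases le_total C1 C2 with hc | hc
  · rw [min_eq_left hc] at hent; linarith
  · rw [min_eq_right hc] at hent; linarith
end

section
/- The stationary-state solution map depends only on (D_1, S_2): if two Riemann problems have the same upstream demand D_1 and the same downstream supply S_2 (but possibly different upstream supply S_1 and downstream demand D_2), then they have the same stationary states U_1⁻ and U_2⁺ and the same boundary flux. -/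
lemma riemann_key (C1 C2 D1 S1 D2 S2 d1m s1m d2p s2p vd1 vs1 vd2 vs2 : ℝ)
    (h : RiemannConds C1 C2 D1 S1 D2 S2 d1m s1m d2p s2p vd1 vs1 vd2 vs2) :
    ((D1 ≤ S2 ∧ d1m = D1 ∧ s1m = C1) ∨ (S2 < D1 ∧ d1m = C1 ∧ s1m = S2)) ∧
    ((D1 < S2 ∧ d2p = D1 ∧ s2p = C2) ∨ (S2 ≤ D1 ∧ d2p = C2 ∧ s2p = S2)) := by
  obtain ⟨⟨hD1, hD1C, _, _, _⟩, ⟨_, _, hS2, hS2C, _⟩, ⟨_, h1mC, _, h1sC, _⟩,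
    ⟨_, h2dC, _, h2sC, _⟩, _, _, hflux, hst1, hst2, hint1a, hint1b, hint2a, hint2b, hent⟩ := h
  rcases hst1 with ⟨e1, e2⟩ | ⟨e1, e2⟩ <;> rcases hst2 with ⟨f1, f2⟩ | ⟨f1, f2⟩
  · -- d1m=D1, s1m=C1, d2p=C2, s2p=S2 : flux D1 = S2
    have hq : D1 = S2 := by
      rw [e1, e2, f1, f2, min_eq_left hD1C, min_eq_right hS2C] at hflux
      exact hflux
    exact ⟨Or.inl ⟨le_of_eq hq, e1, e2⟩, Or.inr ⟨le_of_eq hq.symm, f1, f2⟩⟩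
  · -- d1m=D1, s1m=C1, d2p<S2, s2p=C2 : flux D1 = d2p < S2
    have hq : D1 = d2p := by
      rw [e1, e2, f2, min_eq_left hD1C, min_eq_left h2dC] at hflux
      exact hflux
    have hlt : D1 < S2 := hq ▸ f1
    exact ⟨Or.inl ⟨le_of_lt hlt, e1, e2⟩, Or.inl ⟨hlt, hq.symm, f2⟩⟩
  · -- d1m=C1, s1m<D1, d2p=C2, s2p=S2 : flux s1m = S2 < D1
    have hq : s1m = S2 := by
      rw [e1, f1, f2, min_eq_right h1sC, min_eq_right hS2C] at hflux
      exact hflux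
    have hlt : S2 < D1 := hq ▸ e2
    exact ⟨Or.inr ⟨hlt, e1, hq⟩, Or.inr ⟨le_of_lt hlt, f1, f2⟩⟩
  · -- d1m=C1, s1m<D1, d2p<S2, s2p=C2 : contradiction
    exfalso
    have hs1C : s1m < C1 := lt_of_lt_of_le e2 hD1C
    have hd2C : d2p < C2 := lt_of_lt_of_le f1 hS2C
    obtain ⟨hv1, _⟩ := hint1a hs1C
    obtain ⟨_, hv2⟩ := hint2a hd2C
    rw [e1, min_eq_right h1sC] at hflux hent
    rw [f2, min_eq_left h2dC] at hflux
    rw [hv1, hv2, e1, f2] at hent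
    rcases le_total C1 C2 with hc | hc
    · rw [min_eq_left hc] at hent; linarith
    · rw [min_eq_right hc] at hent; linarith

/-- the stationary states depend only on the upstream demand `D1` and
the downstream supply `S2`: two Riemann problems with the same `D1` and `S2` (but
possibly different upstream supply `S1` and downstream demand `D2`) have the same
stationary states and the same boundary flux. -/
theorem stationary_states_depend_only_on_demand_supply
    (C1 C2 D1 S1 D2 S2 S1' D2' : ℝ)
    (d1m s1m d2p s2p vd1 vs1 vd2 vs2 : ℝ)
    (d1m' s1m' d2p' s2p' vd1' vs1' vd2' vs2' : ℝ)
    (h : RiemannConds C1 C2 D1 S1 D2 S2 d1m s1m d2p s2p vd1 vs1 vd2 vs2)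
    (h' : RiemannConds C1 C2 D1 S1' D2' S2 d1m' s1m' d2p' s2p' vd1' vs1' vd2' vs2') :
    d1m = d1m' ∧ s1m = s1m' ∧ d2p = d2p' ∧ s2p = s2p' ∧
    min d1m s1m = min d1m' s1m' := by
  obtain ⟨k1, k2⟩ := riemann_key _ _ _ _ _ _ _ _ _ _ _ _ _ _ h
  obtain ⟨k1', k2'⟩ := riemann_key _ _ _ _ _ _ _ _ _ _ _ _ _ _ h'
  have e1 : d1m = d1m' ∧ s1m = s1m' := by
    rcases k1 with ⟨hle, a, b⟩ | ⟨hlt, a, b⟩ <;> rcases k1' with ⟨hle', a', b'⟩ | ⟨hlt', a', b'⟩ <;>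
      first
      | exact ⟨a.trans a'.symm, b.trans b'.symm⟩
      | (exfalso; linarith)
  have e2 : d2p = d2p' ∧ s2p = s2p' := by
    rcases k2 with ⟨hlt, a, b⟩ | ⟨hle, a, b⟩ <;> rcases k2' with ⟨hlt', a', b'⟩ | ⟨hle', a', b'⟩ <;>
      first
      | exact ⟨a.trans a'.symm, b.trans b'.symm⟩
      | (exfalso; linarith)
  exact ⟨e1.1, e1.2, e2.1, e2.2, by rw [e1.1, e1.2]⟩
end

section
/- Let R_1, R_2 : [0, ∞] → ℝ be strictly increasing continuous functions (inverse density maps) with R_i(0) = 0, and let C_1 < C_2. Define N_a(q) = R_1(q/C_1)·L_1 + R_2(q/C_2)·(L − L_1) for q ∈ [0, C_1], N_b(L_2) = R_1(1)·L_1 + R_2(C_1/C_2)·(L_2 − L_1) + R_2(C_2/C_1)·(L − L_2) for L_2 ∈ [L_1, L], and N_d(q) = R_1(C_1/q)·L_1 + R_2(C_2/q)·(L − L_1) for q ∈ (0, C_1). Then for any q ≤ C_1, any L_2 ∈ (L_1, L), and any q' < C_1: N_a(q) ≤ R_1(1)·L_1 + R_2(C_1/C_2)·(L − L_1) < N_b(L_2)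 < R_1(1)·L_1 + R_2(C_2/C_1)·(L − L_1) < N_d(q'). In particular, the four scenarios of asymptotic stationary states correspond to disjoint ranges of the total number of vehicles. -/
/-- with strictly increasing inverse density maps `R1, R2` vanishing at
`0`, and `C1 < C2`, the vehicle counts of the four stationary scenarios on the ring
road satisfy, for any `q ∈ [0, C1]`, `L2 ∈ (L1, L)` and `q' ∈ (0, C1)`:
`N_a q ≤ R1 1 · L1 + R2 (C1/C2) · (L − L1) < N_b L2
      < R1 1 · L1 + R2 (C2/C1) · (L − L1) < N_d q'`,
so the four scenarios correspond to disjoint ranges of the total number of vehicles. -/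
theorem ring_road_vehicle_count_ordering
    (R1 R2 : ℝ → ℝ) (L L1 C1 C2 : ℝ)
    (hL1 : 0 < L1) (hL : L1 < L) (hC1 : 0 < C1) (hC : C1 < C2)
    (hR1 : StrictMonoOn R1 (Set.Ici 0)) (hR2 : StrictMonoOn R2 (Set.Ici 0))
    (hR10 : R1 0 = 0) (hR20 : R2 0 = 0) :
    ∀ q ∈ Set.Icc (0:ℝ) C1, ∀ L2 ∈ Set.Ioo L1 L, ∀ q' ∈ Set.Ioo (0:ℝ) C1,
      R1 (q / C1) * L1 + R2 (q / C2) * (L - L1)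
        ≤ R1 1 * L1 + R2 (C1 / C2) * (L - L1) ∧
      R1 1 * L1 + R2 (C1 / C2) * (L - L1)
        < R1 1 * L1 + R2 (C1 / C2) * (L2 - L1) + R2 (C2 / C1) * (L - L2) ∧
      R1 1 * L1 + R2 (C1 / C2) * (L2 - L1) + R2 (C2 / C1) * (L - L2)
        < R1 1 * L1 + R2 (C2 / C1) * (L - L1) ∧
      R1 1 * L1 + R2 (C2 / C1) * (L - L1)
        < R1 (C1 / q') * L1 + R2 (C2 / q') * (L - L1) := by
  rintro q ⟨hq0, hqC⟩ L2 ⟨hL2a, hL2b⟩ q' ⟨hq'0, hq'C⟩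
  have hC2 : (0:ℝ) < C2 := hC1.trans hC
  have hr22 : R2 (C1 / C2) < R2 (C2 / C1) := by
    apply hR2 (Set.mem_Ici.mpr (by positivity)) (Set.mem_Ici.mpr (by positivity))
    calc C1 / C2 < 1 := by rw [div_lt_one hC2]; exact hC
    _ < C2 / C1 := by rw [lt_div_iff₀ hC1]; linarith
  refine ⟨?_, ?_, ?_, ?_⟩
  · have h1 : R1 (q / C1) ≤ R1 1 := by
      rcases eq_or_lt_of_le hqC with h | h
      · simp [h, div_self hC1.ne']
      · exact le_of_lt (hR1 (Set.mem_Ici.mpr (by positivity)) (Set.mem_Ici.mpr (by norm_num)) (by rw [div_lt_one hC1]; exact h))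
    have h2 : R2 (q / C2) ≤ R2 (C1 / C2) := by
      rcases eq_or_lt_of_le hqC with h | h
      · simp [h]
      · exact le_of_lt (hR2 (Set.mem_Ici.mpr (by positivity)) (Set.mem_Ici.mpr (by positivity)) (by gcongr))
    have := mul_le_mul_of_nonneg_right h1 hL1.le
    have := mul_le_mul_of_nonneg_right h2 (by linarith : (0:ℝ) ≤ L - L1)
    linarith
  · nlinarith [mul_lt_mul_of_pos_right hr22 (by linarith : (0:ℝ) < L - L2)]
  · nlinarith [mul_lt_mul_of_pos_right hr22 (by linarith : (0:ℝ) < L2 - L1)]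
  · have h1 : R1 1 < R1 (C1 / q') := by
      apply hR1 (Set.mem_Ici.mpr (by norm_num)) (Set.mem_Ici.mpr (by positivity))
      rw [lt_div_iff₀ hq'0]; linarith
    have h2 : R2 (C2 / C1) < R2 (C2 / q') := by
      apply hR2 (Set.mem_Ici.mpr (by positivity)) (Set.mem_Ici.mpr (by positivity))
      gcongr
    nlinarith [mul_lt_mul_of_pos_right h1 hL1, mul_lt_mul_of_pos_right h2 (by linarith : (0:ℝ) < L - L1)]
end

section
/- In the Riemann problem for the homogeneous LWR model (C_1 = C_2 = C) with upstream state U_1 strictly under-critical (D_1 < S_1 = C) and downstream state U_2 strictly over-critical (S_2 < D_2 = C): if q(U_1) < q(U_2), i.e., D_1 < S_2, then the unique stationary states are U_1⁻ = (D_1, C) and U_2⁺ = (D_1, C), and the boundary flux equals D_1; if q(U_1) > q(U_2), i.e., S_2 < D_1, the stationary states equal (C, S_2) on both links with boundary flux S_2. -/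
/-- homogeneous LWR, Cases 4 and 5: with equal capacities
`C1 = C2 = C`, upstream state strictly under-critical (`D1 < S1 = C`) and downstream
state strictly over-critical (`S2 < D2 = C`): if `D1 < S2` then both stationary
states are `(D1, C)` and the boundary flux is `D1`; if `S2 < D1` then both
stationary states are `(C, S2)` and the boundary flux is `S2`. -/
theorem homogeneous_riemann_cases_4_5
    (C D1 S1 D2 S2 d1m s1m d2p s2p vd1 vs1 vd2 vs2 : ℝ)
    (h : RiemannConds C C D1 S1 D2 S2 d1m s1m d2p s2p vd1 vs1 vd2 vs2)
    (hSUC : D1 < S1) (hS1 : S1 = C)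
    (hSOC : S2 < D2) (hD2 : D2 = C) :
    (D1 < S2 →
      d1m = D1 ∧ s1m = C ∧ d2p = D1 ∧ s2p = C ∧ min d1m s1m = D1) ∧
    (S2 < D1 →
      d1m = C ∧ s1m = S2 ∧ d2p = C ∧ s2p = S2 ∧ min d1m s1m = S2) := by
  obtain ⟨⟨hD1a, hD1b, hS1a, hS1b, hmax1⟩, ⟨hD2a, hD2b, hS2a, hS2b, hmax2⟩,
    ⟨h1a, h1b, h1c, h1d, h1e⟩, ⟨h2a, h2b, h2c, h2d, h2e⟩,
    hV1, hV2, hflux, hup, hdn, hint1, hint1', hint2, hint2', hent⟩ := h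
  rw [hS1] at hSUC
  rw [hD2] at hSOC
  constructor
  · intro hlt
    rcases hup with ⟨hd1, hs1⟩ | ⟨hd1, hs1⟩
    · rcases hdn with ⟨hd2, hs2⟩ | ⟨hd2, hs2⟩
      · rw [hd1, hs1, hd2, hs2, min_eq_left (le_of_lt hSUC),
          min_eq_right hS2b] at hflux
        linarith
      · rw [hd1, hs1, hs2, min_eq_left (le_of_lt hSUC),
          min_eq_left h2b] at hflux
        exact ⟨hd1, hs1, by linarith, hs2,
          by rw [hd1, hs1, min_eq_left (le_of_lt hSUC)]⟩
    · have hs1C : s1m < C := lt_trans hs1 hSUC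
      obtain ⟨hvd1, hvs1⟩ := hint1 hs1C
      rcases hdn with ⟨hd2, hs2⟩ | ⟨hd2, hs2⟩
      · rw [hd1, hd2, hs2, min_eq_right (le_of_lt hs1C),
          min_eq_right hS2b] at hflux
        linarith
      · have hd2C : d2p < C := lt_trans hd2 hSOC
        obtain ⟨hvd2, hvs2⟩ := hint2 hd2C
        rw [hd1, min_eq_right (le_of_lt hs1C)] at hent
        rw [hvd1, hd1, hvs2, hs2, min_self] at hent
        linarith
  · intro hlt
    rcases hup with ⟨hd1, hs1⟩ | ⟨hd1, hs1⟩
    · rcases hdn with ⟨hd2, hs2⟩ | ⟨hd2, hs2⟩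
      · rw [hd1, hs1, hd2, hs2, min_eq_left (le_of_lt hSUC),
          min_eq_right hS2b] at hflux
        linarith
      · rw [hd1, hs1, hs2, min_eq_left (le_of_lt hSUC),
          min_eq_left h2b] at hflux
        linarith
    · have hs1C : s1m < C := lt_trans hs1 hSUC
      obtain ⟨hvd1, hvs1⟩ := hint1 hs1C
      rcases hdn with ⟨hd2, hs2⟩ | ⟨hd2, hs2⟩
      · rw [hd1, hd2, hs2, min_eq_right (le_of_lt hs1C),
          min_eq_right hS2b] at hflux
        exact ⟨hd1, hflux, hd2, hs2,
          by rw [hd1, hflux, min_eq_right hS2b]⟩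
      · have hd2C : d2p < C := lt_trans hd2 hSOC
        obtain ⟨hvd2, hvs2⟩ := hint2 hd2C
        rw [hd1, min_eq_right (le_of_lt hs1C)] at hent
        rw [hvd1, hd1, hvs2, hs2, min_self] at hent
        linarith
end
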